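/- arXiv:1807.04522 — 2 statements merged into one kernel-verified Lean document; each statement's English description precedes it below -/
import Mathlib

section
/- Suppose all partial derivatives ∂V/∂r_{ij} of an N-body potential V (as a function of the mutual distances) are strictly positive at a configuration q with center of mass at the origin, and suppose all gradients ∂V/∂q_i are orthogonal to a fixed nonzero vector λ ∈ ℝ³. Then all position vectors q_i are orthogonal to λ (i.e., the configuration is planar). -/
open scoped RealInnerProductSpace

/-- If all radial derivatives `D i j = ∂V/∂r_{ij}` are strictly positive and
symmetric, the center of mass is at the origin, and every gradient
`∂V/∂qᵢ = ∑_{j≠i} D i j (qᵢ - qⱼ)/r_{ij}` is orthogonal to a fixed nonzero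
vector `λ`, then every position vector `qᵢ` is orthogonal to `λ`, i.e. the
configuration is planar. -/
theorem positive_radial_derivatives_implies_planar
    (N : ℕ) (m : Fin N → ℝ) (hm : ∀ i, 0 < m i)
    (q : Fin N → EuclideanSpace ℝ (Fin 3))
    (hq : ∀ i j, i ≠ j → q i ≠ q j)
    (hcm : ∑ i, m i • q i = 0)
    (D : Fin N → Fin N → ℝ)
    (hDsymm : ∀ i j, D i j = D j i)
    (hDpos : ∀ i j, i ≠ j → 0 < D i j)
    (lam : EuclideanSpace ℝ (Fin 3)) (hlam : lam ≠ 0)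
    (horth : ∀ i,
      ⟪∑ j ∈ Finset.univ.filter (fun j => j ≠ i),
          (D i j / ‖q i - q j‖) • (q i - q j), lam⟫ = 0) :
    ∀ i, ⟪q i, lam⟫ = 0 := by
  classical
  set x : Fin N → ℝ := fun i => ⟪q i, lam⟫ with hx
  set g : Fin N → Fin N → ℝ :=
    fun i j => if i = j then 0 else D i j / ‖q i - q j‖ with hg
  have hgsymm : ∀ i j, g i j = g j i := by
    intro i j
    by_cases h : i = j
    · subst h; rfl
    · simp [hg, h, Ne.symm h, hDsymm i j, norm_sub_rev]
  have hgpos : ∀ i j, i ≠ j → 0 < g i j := by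
    intro i j h
    simp only [hg, if_neg h]
    exact div_pos (hDpos i j h) (norm_sub_pos_iff.mpr (hq i j h))
  have hgnn : ∀ i j, 0 ≤ g i j := by
    intro i j
    by_cases h : i = j
    · simp [hg, h]
    · exact le_of_lt (hgpos i j h)
  have hE : ∀ i, ∑ j, g i j * (x i - x j) = 0 := by
    intro i
    have h0 := horth i
    rw [sum_inner] at h0
    have h1 : ∀ j, ⟪(D i j / ‖q i - q j‖) • (q i - q j), lam⟫
        = (D i j / ‖q i - q j‖) * (x i - x j) := by
      intro j
      rw [real_inner_smul_left, inner_sub_left]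
    simp only [h1] at h0
    calc ∑ j, g i j * (x i - x j)
        = ∑ j ∈ Finset.univ.filter (fun j => j ≠ i),
            (D i j / ‖q i - q j‖) * (x i - x j) := by
          rw [Finset.sum_filter]
          refine Finset.sum_congr rfl fun j _ => ?_
          by_cases h : j = i
          · subst h; simp [hg]
          · simp [hg, h, Ne.symm h]
      _ = 0 := h0
  have h1 : ∑ i, ∑ j, g i j * (x i * (x i - x j)) = 0 := by
    have : ∀ i, ∑ j, g i j * (x i * (x i - x j))
        = x i * ∑ j, g i j * (x i - x j) := by
      intro i
      rw [Finset.mul_sum]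
      exact Finset.sum_congr rfl fun j _ => by ring
    simp [this, hE]
  have h2 : ∑ i, ∑ j, g i j * (x j * (x i - x j)) = 0 := by
    rw [Finset.sum_comm]
    have : ∀ j, ∑ i, g i j * (x j * (x i - x j))
        = -(x j * ∑ i, g j i * (x j - x i)) := by
      intro j
      rw [Finset.mul_sum, ← Finset.sum_neg_distrib]
      refine Finset.sum_congr rfl fun i _ => ?_
      rw [hgsymm i j]; ring
    simp [this, hE]
  have hS : ∑ i, ∑ j, g i j * (x i - x j) ^ 2 = 0 := by
    calc ∑ i, ∑ j, g i j * (x i - x j) ^ 2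
        = ∑ i, ∑ j, (g i j * (x i * (x i - x j)) - g i j * (x j * (x i - x j))) := by
          refine Finset.sum_congr rfl fun i _ => Finset.sum_congr rfl fun j _ => ?_
          ring
      _ = 0 := by
          simp only [Finset.sum_sub_distrib]
          rw [h1, h2, sub_zero]
  have hterm : ∀ i j, g i j * (x i - x j) ^ 2 = 0 := by
    have hout : ∀ i ∈ Finset.univ, (0:ℝ) ≤ ∑ j, g i j * (x i - x j) ^ 2 := by
      intro i _
      exact Finset.sum_nonneg fun j _ => mul_nonneg (hgnn i j) (sq_nonneg _)
    intro i j
    have hi := (Finset.sum_eq_zero_iff_of_nonneg hout).mp hS i (Finset.mem_univ i)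
    have hin : ∀ j ∈ Finset.univ, (0:ℝ) ≤ g i j * (x i - x j) ^ 2 :=
      fun j _ => mul_nonneg (hgnn i j) (sq_nonneg _)
    exact (Finset.sum_eq_zero_iff_of_nonneg hin).mp hi j (Finset.mem_univ j)
  have hxeq : ∀ i j, x i = x j := by
    intro i j
    by_cases h : i = j
    · rw [h]
    · have h0 := hterm i j
      have hg' := (hgpos i j h).ne'
      have : (x i - x j) ^ 2 = 0 := by
        rcases mul_eq_zero.mp h0 with h' | h'
        · exact absurd h' hg'
        · exact h'
      have := pow_eq_zero_iff (n := 2) (by norm_num) |>.mp this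
      linarith [sub_eq_zero.mp this]
  intro i
  have hsum : ∑ j, m j * x j = 0 := by
    have h0 : ⟪∑ j, m j • q j, lam⟫ = (0:ℝ) := by
      rw [hcm, inner_zero_left]
    rw [sum_inner] at h0
    simp only [real_inner_smul_left] at h0
    exact h0
  have hms : (∑ j, m j) * x i = 0 := by
    rw [Finset.sum_mul, ← hsum]
    exact Finset.sum_congr rfl fun j _ => by rw [hxeq i j]
  have hmpos : 0 < ∑ j, m j :=
    Finset.sum_pos (fun j _ => hm j) ⟨i, Finset.mem_univ i⟩
  have : x i = 0 := by
    rcases mul_eq_zero.mp hms with h' | h'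
    · exact absurd h' hmpos.ne'
    · exact h'
  exact this
end

section
/- For the charged three-body problem, the collinear central configuration condition on the reduced space reduces to the vanishing of the fifth degree polynomial f(u) = α₁ m₁ u²(1+u)²(m₂ + m₂u + m₃u) - α₂ m₂ (1+u)²(m₁ + m₃ + m₁u) - α₃ m₃ u²(m₂ - m₁u); i.e., positive reals x, y with y = ux, z = -(1+u)x, and λ ∈ ℝ satisfy the three central-configuration equations (eq. (14)) if and only if f(u) = 0. -/
/-!
Since `x + y + z = 0`, the combination `m₁ E₁ + m₂ E₂ - m₃ E₃` of the three equations vanishes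
identically, so the third equation follows from the first two. Eliminating `λ` from those two
leaves `m₁ y L₁ = m₂ x L₂` for their left-hand sides `L₁, L₂`, and clearing the denominators
`x u² (1 + u)²` of `m₁ y L₁ - m₂ x L₂` on the reduced space gives `f(u)`.
-/

noncomputable def chargedPoly (α₁ α₂ α₃ m₁ m₂ m₃ u : ℝ) : ℝ :=
  α₁ * m₁ * u ^ 2 * (1 + u) ^ 2 * (m₂ + m₂ * u + m₃ * u)
    - α₂ * m₂ * (1 + u) ^ 2 * (m₁ + m₃ + m₁ * u)
    - α₃ * m₃ * u ^ 2 * (m₂ - m₁ * u)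

section CentralConfiguration

variable {m₁ m₂ m₃ α₁ α₂ α₃ x y z lam : ℝ}

theorem centralConfig_eq₃_of_eq₁_of_eq₂ (hm₃ : m₃ ≠ 0) (hxyz : x + y + z = 0)
    (h₁ : α₁ * (m₂ + m₃) / x ^ 2 - α₂ * m₂ / y ^ 2 + α₃ * m₃ / z ^ 2 = lam * m₂ * m₃ * x)
    (h₂ : α₂ * (m₁ + m₃) / y ^ 2 - α₁ * m₁ / x ^ 2 + α₃ * m₃ / z ^ 2 = lam * m₁ * m₃ * y) :
    α₃ * (m₁ + m₂) / z ^ 2 + α₁ * m₁ / x ^ 2 + α₂ * m₂ / y ^ 2 = -(lam * m₁ * m₂ * z) := by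
  refine mul_left_cancel₀ hm₃ ?_
  linear_combination m₁ * h₁ + m₂ * h₂ + lam * m₁ * m₂ * m₃ * hxyz

theorem exists_centralConfig_multiplier_iff (hm₂ : m₂ ≠ 0) (hm₃ : m₃ ≠ 0) (hx : x ≠ 0) :
    (∃ lam : ℝ,
      α₁ * (m₂ + m₃) / x ^ 2 - α₂ * m₂ / y ^ 2 + α₃ * m₃ / z ^ 2 = lam * m₂ * m₃ * x ∧
      α₂ * (m₁ + m₃) / y ^ 2 - α₁ * m₁ / x ^ 2 + α₃ * m₃ / z ^ 2 = lam * m₁ * m₃ * y) ↔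
    m₁ * y * (α₁ * (m₂ + m₃) / x ^ 2 - α₂ * m₂ / y ^ 2 + α₃ * m₃ / z ^ 2) =
      m₂ * x * (α₂ * (m₁ + m₃) / y ^ 2 - α₁ * m₁ / x ^ 2 + α₃ * m₃ / z ^ 2) := by
  constructor
  · rintro ⟨lam, h₁, h₂⟩
    linear_combination m₁ * y * h₁ - m₂ * x * h₂
  · intro hcross
    set L₁ := α₁ * (m₂ + m₃) / x ^ 2 - α₂ * m₂ / y ^ 2 + α₃ * m₃ / z ^ 2
    set L₂ := α₂ * (m₁ + m₃) / y ^ 2 - α₁ * m₁ / x ^ 2 + α₃ * m₃ / z ^ 2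
    have hm₂x : m₂ * x ≠ 0 := mul_ne_zero hm₂ hx
    refine ⟨L₁ / (m₂ * m₃ * x), by field_simp, mul_left_cancel₀ hm₂x ?_⟩
    field_simp
    linear_combination -hcross

theorem centralConfig_cross_eq_chargedPoly {u : ℝ} (hx : x ≠ 0) (hu : u ≠ 0) (hu₁ : 1 + u ≠ 0)
    (hy : y = u * x) (hz : z = -(1 + u) * x) :
    x * u ^ 2 * (1 + u) ^ 2 *
        (m₁ * y * (α₁ * (m₂ + m₃) / x ^ 2 - α₂ * m₂ / y ^ 2 + α₃ * m₃ / z ^ 2) -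
          m₂ * x * (α₂ * (m₁ + m₃) / y ^ 2 - α₁ * m₁ / x ^ 2 + α₃ * m₃ / z ^ 2)) =
      chargedPoly α₁ α₂ α₃ m₁ m₂ m₃ u := by
  subst hy hz
  unfold chargedPoly
  field_simp
  ring

end CentralConfiguration

theorem collinear_central_config_iff_poly_general
    (m₁ m₂ m₃ α₁ α₂ α₃ x u : ℝ)
    (hm₂ : 0 < m₂) (hm₃ : 0 < m₃)
    (hx : 0 < x) (hu : 0 < u)
    (y z : ℝ) (hy : y = u * x) (hz : z = -(1 + u) * x) :
    (∃ lam : ℝ,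
      α₁ * (m₂ + m₃) / x ^ 2 - α₂ * m₂ / y ^ 2 + α₃ * m₃ / z ^ 2 = lam * m₂ * m₃ * x ∧
      α₂ * (m₁ + m₃) / y ^ 2 - α₁ * m₁ / x ^ 2 + α₃ * m₃ / z ^ 2 = lam * m₁ * m₃ * y ∧
      α₃ * (m₁ + m₂) / z ^ 2 + α₁ * m₁ / x ^ 2 + α₂ * m₂ / y ^ 2 = -(lam * m₁ * m₂ * z))
    ↔ chargedPoly α₁ α₂ α₃ m₁ m₂ m₃ u = 0 := by
  have hxyz : x + y + z = 0 := by rw [hy, hz]; ring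
  have hscale : x * u ^ 2 * (1 + u) ^ 2 ≠ 0 := by positivity
  calc _ ↔ ∃ lam : ℝ,
        α₁ * (m₂ + m₃) / x ^ 2 - α₂ * m₂ / y ^ 2 + α₃ * m₃ / z ^ 2 = lam * m₂ * m₃ * x ∧
        α₂ * (m₁ + m₃) / y ^ 2 - α₁ * m₁ / x ^ 2 + α₃ * m₃ / z ^ 2 = lam * m₁ * m₃ * y :=
        exists_congr fun _ => and_congr_right fun h₁ =>
          and_iff_left_of_imp (centralConfig_eq₃_of_eq₁_of_eq₂ hm₃.ne' hxyz h₁)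
    _ ↔ _ := exists_centralConfig_multiplier_iff hm₂.ne' hm₃.ne' hx.ne'
    _ ↔ _ := by
      rw [← centralConfig_cross_eq_chargedPoly hx.ne' hu.ne' (by positivity) hy hz,
        mul_eq_zero, sub_eq_zero, or_iff_right hscale]

/-- On the reduced space of collinear configurations (coordinates `y = u*x`,
`z = -(1+u)*x` with `x, y > 0`), the three central-configuration equations have a
common multiplier `λ` if and only if `f(u) = 0`. -/
theorem collinear_central_config_iff_poly
    (m₁ m₂ m₃ α₁ α₂ α₃ x u : ℝ)
    (hm₁ : 0 < m₁) (hm₂ : 0 < m₂) (hm₃ : 0 < m₃)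
    (hx : 0 < x) (hu : 0 < u)
    (y z : ℝ) (hy : y = u * x) (hz : z = -(1 + u) * x) :
    (∃ lam : ℝ,
      α₁ * (m₂ + m₃) / x ^ 2 - α₂ * m₂ / y ^ 2 + α₃ * m₃ / z ^ 2 = lam * m₂ * m₃ * x ∧
      α₂ * (m₁ + m₃) / y ^ 2 - α₁ * m₁ / x ^ 2 + α₃ * m₃ / z ^ 2 = lam * m₁ * m₃ * y ∧
      α₃ * (m₁ + m₂) / z ^ 2 + α₁ * m₁ / x ^ 2 + α₂ * m₂ / y ^ 2 = -(lam * m₁ * m₂ * z))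
    ↔ chargedPoly α₁ α₂ α₃ m₁ m₂ m₃ u = 0 :=
  collinear_central_config_iff_poly_general m₁ m₂ m₃ α₁ α₂ α₃ x u hm₂ hm₃ hx hu y z hy hz
end
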